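/- arXiv:1710.01990 — 4 statements merged into one kernel-verified Lean document; each statement's English description precedes it below -/
import Mathlib

section
/- For integers n ≥ 2 and 1 ≤ k ≤ n−1, the k-circulant digraph C_n(1,…,k) is ⌈k/2⌉-robust. -/
/-- In-neighbor set of vertex `j` in the `k`-circulant digraph `C_n(1,…,k)`:
`K_j = {j-1, j-2, …, j-k}` (mod `n`). -/
def circInNbrs (n k : ℕ) (j : ZMod n) : Finset (ZMod n) :=
  (Finset.Icc 1 k).image fun a : ℕ => j - (a : ZMod n)

/-- A nonempty subset `S` is `r`-reachable if some `i ∈ S` has at least `r`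
in-neighbors outside of `S`. -/
def circRReachable (n k r : ℕ) (S : Finset (ZMod n)) : Prop :=
  ∃ i ∈ S, r ≤ ((circInNbrs n k i) \ S).card

/-- The `k`-circulant digraph on `n` nodes is `r`-robust: for every pair of
nonempty disjoint subsets of the vertex set, at least one is `r`-reachable. -/
def circRRobust (n k r : ℕ) : Prop :=
  ∀ S1 S2 : Finset (ZMod n), S1.Nonempty → S2.Nonempty → Disjoint S1 S2 →
    circRReachable n k r S1 ∨ circRReachable n k r S2

/-!
Choose `a ∈ S1` and `b ∈ S2` minimising the forward distance `g = (b - a).val`. Then none of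
`b - 1, …, b - (g - 1)` lies in `S2` (and `b - g = a` lies in `S1`), so every in-neighbour
`b - t` of `b` inside `S2` has `t > g` and equals `a - (t - g)`, an in-neighbour of `a` outside
`S1`. Hence `|K_a \ S1| ≥ |K_b ∩ S2| = k - |K_b \ S2|`, and one of `a`, `b` has at least
`⌈k/2⌉` in-neighbours outside its own set.
-/

lemma mem_circInNbrs {n k : ℕ} {j x : ZMod n} :
    x ∈ circInNbrs n k j ↔ ∃ t ∈ Finset.Icc 1 k, j - (t : ZMod n) = x :=
  Finset.mem_image

lemma card_circInNbrs {n k : ℕ} (hk : k ≤ n) (j : ZMod n) : (circInNbrs n k j).card = k := by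
  rw [circInNbrs, Finset.card_image_of_injOn, Nat.card_Icc, Nat.add_sub_cancel]
  intro x hx y hy hxy
  simp only [Finset.coe_Icc, Set.mem_Icc] at hx hy
  -- shift `1, …, k` down to `0, …, k - 1`, where the cast to `ZMod n` is read back by `val`
  have hcast : ((x - 1 : ℕ) : ZMod n) = ((y - 1 : ℕ) : ZMod n) := by
    rw [Nat.cast_sub hx.1, Nat.cast_sub hy.1, sub_right_injective hxy]
  have := congrArg ZMod.val hcast
  rw [ZMod.val_cast_of_lt (by omega), ZMod.val_cast_of_lt (by omega)] at this
  omega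

section MinimalGap

variable {n k : ℕ} [NeZero n] {S1 S2 : Finset (ZMod n)} {a b : ZMod n}

lemma sub_notMem_of_minimal_gap (ha : a ∈ S1)
    (hmin : ∀ x ∈ S1, ∀ y ∈ S2, (b - a).val ≤ (y - x).val)
    {t : ℕ} (ht : 1 ≤ t) (htg : t ≤ (b - a).val) : b - (t : ZMod n) ∉ S2 := by
  intro hmem
  have hgap : (b - (t : ZMod n)) - a = (((b - a).val - t : ℕ) : ZMod n) := by
    rw [Nat.cast_sub htg, ZMod.natCast_zmod_val]; ring
  have := hmin a ha _ hmem
  rw [hgap, ZMod.val_cast_of_lt ((Nat.sub_le _ _).trans_lt (ZMod.val_lt _))] at this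
  omega

lemma circInNbrs_inter_subset_sdiff_of_minimal_gap (hdisj : Disjoint S1 S2) (ha : a ∈ S1)
    (hmin : ∀ x ∈ S1, ∀ y ∈ S2, (b - a).val ≤ (y - x).val) :
    circInNbrs n k b ∩ S2 ⊆ circInNbrs n k a \ S1 := by
  intro x hx
  obtain ⟨hxb, hxS2⟩ := Finset.mem_inter.mp hx
  obtain ⟨t, ht, rfl⟩ := mem_circInNbrs.mp hxb
  rw [Finset.mem_Icc] at ht
  have hgt : (b - a).val < t := by
    by_contra! hle
    exact sub_notMem_of_minimal_gap ha hmin ht.1 hle hxS2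
  refine Finset.mem_sdiff.mpr ⟨mem_circInNbrs.mpr ⟨t - (b - a).val, ?_, ?_⟩,
    Finset.disjoint_right.mp hdisj hxS2⟩
  · exact Finset.mem_Icc.mpr ⟨by omega, by omega⟩
  · rw [Nat.cast_sub hgt.le, ZMod.natCast_zmod_val]; ring

lemma le_card_sdiff_add_card_sdiff_of_minimal_gap (hk : k ≤ n) (hdisj : Disjoint S1 S2)
    (ha : a ∈ S1) (hmin : ∀ x ∈ S1, ∀ y ∈ S2, (b - a).val ≤ (y - x).val) :
    k ≤ (circInNbrs n k a \ S1).card + (circInNbrs n k b \ S2).card := by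
  have hinter := Finset.card_le_card
    (circInNbrs_inter_subset_sdiff_of_minimal_gap (k := k) hdisj ha hmin)
  have hsplit := Finset.card_inter_add_card_sdiff (circInNbrs n k b) S2
  rw [card_circInNbrs hk] at hsplit
  omega

end MinimalGap

theorem circulant_is_ceil_half_k_robust_general (n k : ℕ) (hn : 2 ≤ n)
    (hk2 : k ≤ n - 1) : circRRobust n k ((k + 1) / 2) := by
  intro S1 S2 hS1 hS2 hdisj
  have : NeZero n := ⟨by omega⟩
  obtain ⟨⟨a, b⟩, hab, hmin⟩ :=
    Finset.exists_min_image (S1 ×ˢ S2) (fun p => (p.2 - p.1).val) (hS1.product hS2)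
  obtain ⟨ha, hb⟩ := Finset.mem_product.mp hab
  have hsum : k ≤ (circInNbrs n k a \ S1).card + (circInNbrs n k b \ S2).card :=
    le_card_sdiff_add_card_sdiff_of_minimal_gap (by omega) hdisj ha
      fun x hx y hy => hmin (x, y) (Finset.mem_product.mpr ⟨hx, hy⟩)
  by_cases hA : (k + 1) / 2 ≤ (circInNbrs n k a \ S1).card
  · exact Or.inl ⟨a, ha, hA⟩
  · exact Or.inr ⟨b, hb, by omega⟩

/-- The `k`-circulant digraph `C_n(1,…,k)` is `⌈k/2⌉`-robust. -/
theorem circulant_is_ceil_half_k_robust (n k : ℕ) (hn : 2 ≤ n) (hk1 : 1 ≤ k)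
    (hk2 : k ≤ n - 1) : circRRobust n k ((k + 1) / 2) :=
  circulant_is_ceil_half_k_robust_general n k hn hk2
end

section
/- Let D be a digraph on n ≥ 2 nodes, let r be a nonnegative integer and s a positive integer with 1 ≤ r+s−1 ≤ ⌈n/2⌉. If D is (r+s−1)-robust, then D is (r,s)-robust. -/
variable {V : Type*} [Fintype V] [DecidableEq V]

/-- In-neighbor set of node `j` in the digraph on `V` with edge relation `E`:
`K_j = {i ∈ V : (i,j) ∈ E}`. -/
def inNbrs (E : V → V → Prop) [DecidableRel E] (j : V) : Finset V :=
  Finset.univ.filter fun i => E i j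

/-- A nonempty subset `S` is `r`-reachable if some `i ∈ S` has at least `r`
in-neighbors outside of `S`. -/
def rReachable (E : V → V → Prop) [DecidableRel E] (r : ℕ) (S : Finset V) : Prop :=
  ∃ i ∈ S, r ≤ ((inNbrs E i) \ S).card

/-- The digraph is `r`-robust: for every pair of nonempty disjoint subsets of
the vertex set, at least one is `r`-reachable. -/
def rRobust (E : V → V → Prop) [DecidableRel E] (r : ℕ) : Prop :=
  ∀ S1 S2 : Finset V, S1.Nonempty → S2.Nonempty → Disjoint S1 S2 →
    rReachable E r S1 ∨ rReachable E r S2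

/-- `X^r_S = {i ∈ S : |K_i \ S| ≥ r}`. -/
def xSet (E : V → V → Prop) [DecidableRel E] (r : ℕ) (S : Finset V) : Finset V :=
  S.filter fun i => r ≤ ((inNbrs E i) \ S).card

/-- The digraph is `(r,s)`-robust: for every pair of nonempty disjoint subsets
`S1, S2` of the vertex set, `|X^r_{S1}| = |S1|`, or `|X^r_{S2}| = |S2|`, or
`|X^r_{S1}| + |X^r_{S2}| ≥ s`. -/
def rsRobust (E : V → V → Prop) [DecidableRel E] (r s : ℕ) : Prop :=
  ∀ S1 S2 : Finset V, S1.Nonempty → S2.Nonempty → Disjoint S1 S2 →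
    (xSet E r S1).card = S1.card ∨ (xSet E r S2).card = S2.card ∨
      s ≤ (xSet E r S1).card + (xSet E r S2).card

/-!
Remove from each `Sₘ` the nodes of `X^r_{Sₘ}`. If `|X^r_{S₁}| + |X^r_{S₂}| < s` and neither
`Sₘ` equals its `X`-set, the remainders are nonempty and disjoint, so by `(r+s-1)`-robustness one
of them has a node with `r+s-1` in-neighbours outside it. At most `|X^r_{Sₘ}| ≤ s-1` of these lie
in `Sₘ`, so the node has `r` in-neighbours outside `Sₘ` and belongs to `X^r_{Sₘ}` after all.
-/

open Finset

theorem Finset.card_sdiff_sdiff_le {α : Type*} [DecidableEq α] (A S X : Finset α) :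
    #(A \ (S \ X)) ≤ #(A \ S) + #X := by
  rw [sdiff_sdiff_right', inf_eq_inter]
  exact (card_union_le _ _).trans (Nat.add_le_add_left (card_le_card inter_subset_right) _)

section

variable (E : V → V → Prop) [DecidableRel E]

theorem sdiff_xSet_nonempty {r : ℕ} {S : Finset V} (h : #(xSet E r S) ≠ #S) :
    (S \ xSet E r S).Nonempty := by
  rw [sdiff_nonempty]
  exact fun hsub => h (congrArg card (Subset.antisymm (filter_subset _ _) hsub))

theorem not_rReachable_sdiff_xSet {r q : ℕ} {S : Finset V} (h : r + #(xSet E r S) ≤ q) :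
    ¬ rReachable E q (S \ xSet E r S) := by
  rintro ⟨i, hi, hq⟩
  obtain ⟨hiS, hiX⟩ := mem_sdiff.mp hi
  have hle := card_sdiff_sdiff_le (inNbrs E i) S (xSet E r S)
  exact hiX (mem_filter.mpr ⟨hiS, by omega⟩)

end

theorem robust_imp_rs_robust_general (E : V → V → Prop) [DecidableRel E] (r s : ℕ)
    (hrob : rRobust E (r + s - 1)) : rsRobust E r s := by
  intro S1 S2 h1 h2 hdis
  by_contra! ⟨hX1, hX2, hlt⟩
  have hdis' : Disjoint (S1 \ xSet E r S1) (S2 \ xSet E r S2) :=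
    hdis.mono sdiff_subset sdiff_subset
  rcases hrob _ _ (sdiff_xSet_nonempty E hX1) (sdiff_xSet_nonempty E hX2) hdis' with h | h
  · exact not_rReachable_sdiff_xSet E (by omega) h
  · exact not_rReachable_sdiff_xSet E (by omega) h

/-- If a digraph on `n ≥ 2` nodes is `(r+s-1)`-robust, where `r ≥ 0`, `s ≥ 1`
and `1 ≤ r+s-1 ≤ ⌈n/2⌉`, then it is `(r,s)`-robust. -/
theorem robust_imp_rs_robust (E : V → V → Prop) [DecidableRel E] (n r s : ℕ)
    (hn : 2 ≤ n) (hcard : Fintype.card V = n) (hs : 1 ≤ s)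
    (hlow : 1 ≤ r + s - 1) (hhigh : r + s - 1 ≤ (n + 1) / 2)
    (hrob : rRobust E (r + s - 1)) : rsRobust E r s :=
  robust_imp_rs_robust_general E r s hrob
end

section
/- For integers n ≥ 2 and 1 ≤ k ≤ n−1 with k odd, the k-circulant digraph C_n(1,…,k) is (⌊(k+3)/4⌋, ⌊(k+3)/4⌋)-robust. -/
/-- `X^r_S = {i ∈ S : |K_i \ S| ≥ r}` in the `k`-circulant digraph. -/
def circXSet (n k r : ℕ) (S : Finset (ZMod n)) : Finset (ZMod n) :=
  S.filter fun i => r ≤ ((circInNbrs n k i) \ S).card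

/-- The `k`-circulant digraph on `n` nodes is `(r,s)`-robust: for every pair of
nonempty disjoint subsets `S1, S2` of the vertex set, `|X^r_{S1}| = |S1|`, or
`|X^r_{S2}| = |S2|`, or `|X^r_{S1}| + |X^r_{S2}| ≥ s`. -/
def circRSRobust (n k r s : ℕ) : Prop :=
  ∀ S1 S2 : Finset (ZMod n), S1.Nonempty → S2.Nonempty → Disjoint S1 S2 →
    (circXSet n k r S1).card = S1.card ∨ (circXSet n k r S2).card = S2.card ∨
      s ≤ (circXSet n k r S1).card + (circXSet n k r S2).card

open Finset

theorem Nat.exists_eq_of_le_add_one {f : ℕ → ℕ} (hf : ∀ t, f (t + 1) ≤ f t + 1) {m : ℕ}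
    (h0 : f 0 ≤ m) {T : ℕ} (hT : m < f T) : ∃ t, f t = m ∧ f t < f (t + 1) := by
  induction T with
  | zero => omega
  | succ T ih =>
    by_cases hm : m < f T
    · exact ih hm
    · exact ⟨T, by have := hf T; omega, by omega⟩

section Circulant

variable {n k : ℕ}

theorem circInNbrs_card (hk : k < n) (j : ZMod n) : #(circInNbrs n k j) = k := by
  rw [circInNbrs, card_image_of_injOn, Nat.card_Icc, Nat.add_sub_cancel]
  intro a ha a' ha' h
  simp only [coe_Icc, Set.mem_Icc] at ha ha'
  have hv := congrArg ZMod.val (sub_right_injective h)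
  rwa [ZMod.val_cast_of_lt (by omega), ZMod.val_cast_of_lt (by omega)] at hv

theorem circInNbrs_add_one_subset (j : ZMod n) :
    circInNbrs n k (j + 1) ⊆ insert j (circInNbrs n k j) := by
  intro x hx
  simp only [circInNbrs, mem_image, mem_Icc] at hx
  obtain ⟨a, ⟨ha1, hak⟩, rfl⟩ := hx
  obtain rfl | ha1 := eq_or_lt_of_le ha1
  · simp
  · refine mem_insert_of_mem (mem_image.mpr ⟨a - 1, mem_Icc.mpr ⟨by omega, by omega⟩, ?_⟩)
    rw [Nat.cast_sub ha1.le]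
    ring

theorem circInNbrs_add_one_inter_subset (S : Finset (ZMod n)) (j : ZMod n) :
    circInNbrs n k (j + 1) ∩ S ⊆ insert j (circInNbrs n k j ∩ S) := by
  intro x hx
  obtain ⟨hxK, hxS⟩ := mem_inter.mp hx
  obtain rfl | hxK := mem_insert.mp (circInNbrs_add_one_subset j hxK)
  · exact mem_insert_self _ _
  · exact mem_insert_of_mem (mem_inter.mpr ⟨hxK, hxS⟩)

theorem card_circInNbrs_add_one_inter_le (S : Finset (ZMod n)) (j : ZMod n) :
    #(circInNbrs n k (j + 1) ∩ S) ≤ #(circInNbrs n k j ∩ S) + 1 :=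
  (card_le_card (circInNbrs_add_one_inter_subset S j)).trans (card_insert_le _ _)

theorem mem_of_card_circInNbrs_inter_lt {S : Finset (ZMod n)} {j : ZMod n}
    (h : #(circInNbrs n k j ∩ S) < #(circInNbrs n k (j + 1) ∩ S)) : j ∈ S := by
  by_contra hj
  have hsub : circInNbrs n k (j + 1) ∩ S ⊆ circInNbrs n k j ∩ S :=
    (subset_insert_iff_of_notMem fun hmem => hj (mem_inter.mp hmem).2).mp
      (circInNbrs_add_one_inter_subset S j)
  exact (card_le_card hsub).not_gt h

theorem exists_mem_card_circInNbrs_inter_eq [NeZero n] (S : Finset (ZMod n)) {a b : ZMod n}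
    {m : ℕ} (hb : #(circInNbrs n k b ∩ S) ≤ m) (ha : m < #(circInNbrs n k a ∩ S)) :
    ∃ x ∈ S, #(circInNbrs n k x ∩ S) = m := by
  set f : ℕ → ℕ := fun t => #(circInNbrs n k (b + t) ∩ S)
  have hf : ∀ t, f (t + 1) ≤ f t + 1 := fun t => by
    simpa only [f, Nat.cast_succ, add_assoc] using card_circInNbrs_add_one_inter_le S (b + t)
  have hfa : f (a - b).val = #(circInNbrs n k a ∩ S) := by
    simp only [f, ZMod.natCast_zmod_val, add_sub_cancel]
  obtain ⟨t, hft, hlt⟩ :=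
    Nat.exists_eq_of_le_add_one hf (by simpa [f] using hb) (by rwa [hfa])
  refine ⟨b + t, mem_of_card_circInNbrs_inter_lt (k := k) ?_, hft⟩
  simpa only [f, Nat.cast_succ, add_assoc] using hlt

theorem card_circInNbrs_inter_add_card_sdiff (hk : k < n) (S : Finset (ZMod n)) (x : ZMod n) :
    #(circInNbrs n k x ∩ S) + #(circInNbrs n k x \ S) = k := by
  rw [card_inter_add_card_sdiff, circInNbrs_card hk]

theorem mem_circXSet_iff (hk : k < n) {r : ℕ} {S : Finset (ZMod n)} {x : ZMod n} :
    x ∈ circXSet n k r S ↔ x ∈ S ∧ #(circInNbrs n k x ∩ S) + r ≤ k := by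
  have := card_circInNbrs_inter_add_card_sdiff hk S x
  rw [circXSet, mem_filter]
  exact and_congr_right fun _ => by omega

theorem card_circXSet_ge (hk : k < n) {r : ℕ} (S : Finset (ZMod n)) {a b : ZMod n}
    (hb : #(circInNbrs n k b ∩ S) < r) (ha : k < #(circInNbrs n k a ∩ S) + r) :
    k + 2 - 2 * r ≤ #(circXSet n k r S) := by
  have : NeZero n := ⟨by omega⟩
  have hlevels : Ico (r - 1) (k + 1 - r) ⊆ (circXSet n k r S).image
      fun x => #(circInNbrs n k x ∩ S) := by
    intro m hm
    rw [mem_Ico] at hm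
    obtain ⟨x, hxS, hx⟩ := exists_mem_card_circInNbrs_inter_eq S
      (show #(circInNbrs n k b ∩ S) ≤ m by omega) (show m < #(circInNbrs n k a ∩ S) by omega)
    exact mem_image.mpr ⟨x, (mem_circXSet_iff hk).mpr ⟨hxS, by omega⟩, hx⟩
  calc k + 2 - 2 * r = #(Ico (r - 1) (k + 1 - r)) := by rw [Nat.card_Ico]; omega
    _ ≤ #(circXSet n k r S) := (card_le_card hlevels).trans card_image_le

theorem exists_card_circInNbrs_sdiff_lt {r : ℕ} {S : Finset (ZMod n)}
    (h : #(circXSet n k r S) ≠ #S) : ∃ x ∈ S, #(circInNbrs n k x \ S) < r := by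
  simpa [circXSet, card_filter_eq_iff] using h

theorem circRSRobust_of_add_two_mul_le (hk : k < n) {r s : ℕ} (hrs : s + 2 * r ≤ k + 2) :
    circRSRobust n k r s := by
  intro S₁ S₂ _ _ hdisj
  by_contra! hne
  obtain ⟨a, -, ha⟩ := exists_card_circInNbrs_sdiff_lt hne.1
  obtain ⟨b, -, hb⟩ := exists_card_circInNbrs_sdiff_lt hne.2.1
  have hb₁ : #(circInNbrs n k b ∩ S₁) < r := by
    refine (card_le_card fun x hx => ?_).trans_lt hb
    obtain ⟨hxK, hxS₁⟩ := mem_inter.mp hx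
    exact mem_sdiff.mpr ⟨hxK, disjoint_left.mp hdisj hxS₁⟩
  have ha₁ : k < #(circInNbrs n k a ∩ S₁) + r := by
    have := card_circInNbrs_inter_add_card_sdiff hk S₁ a
    omega
  have := card_circXSet_ge hk S₁ hb₁ ha₁
  omega

end Circulant

theorem circulant_odd_k_rs_robust_general (n k : ℕ) (hk1 : 1 ≤ k)
    (hk2 : k ≤ n - 1) :
    circRSRobust n k ((k + 3) / 4) ((k + 3) / 4) :=
  circRSRobust_of_add_two_mul_le (by omega) (by omega)

/-- For odd `k`, the `k`-circulant digraph `C_n(1,…,k)` is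
`(⌊(k+3)/4⌋, ⌊(k+3)/4⌋)`-robust. -/
theorem circulant_odd_k_rs_robust (n k : ℕ) (hn : 2 ≤ n) (hk1 : 1 ≤ k)
    (hk2 : k ≤ n - 1) (hkodd : Odd k) :
    circRSRobust n k ((k + 3) / 4) ((k + 3) / 4) :=
  circulant_odd_k_rs_robust_general n k hk1 hk2
end

section
/- Let n ≥ 2 and 1 ≤ k ≤ n−1, and consider the k-circulant digraph C_n(1,…,k). Let σ be a positive integer with σ ≤ k. Suppose S1 and S2 are nonempty disjoint subsets whose union is the whole vertex set, and suppose S2 is not σ-reachable (i.e., every j ∈ S2 satisfies |K_j \ S2| < σ). Then for every i ∈ S1 there exists an integer b with 0 < b < σ such that i+b ∈ S2 and the vertices i+1, i+2, …, i+b−1 all lie in S1 (all arithmetic mod n). -/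
open Finset

lemma ZMod.exists_first_natCast_add_mem {n : ℕ} [NeZero n] (i : ZMod n) {S : Finset (ZMod n)}
    (hS : S.Nonempty) : ∃ b : ℕ, i + b ∈ S ∧ ∀ c < b, i + (c : ZMod n) ∉ S := by
  classical
  have hex : ∃ m : ℕ, i + (m : ZMod n) ∈ S := by
    obtain ⟨j, hj⟩ := hS
    exact ⟨(j - i).val, by simpa [ZMod.natCast_zmod_val] using hj⟩
  exact ⟨Nat.find hex, Nat.find_spec hex, fun c hc => Nat.find_min hex hc⟩

lemma card_image_sub_natCast_Icc {n σ : ℕ} (hσn : σ < n) (j : ZMod n) :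
    ((Icc 1 σ).image fun a : ℕ => j - (a : ZMod n)).card = σ := by
  rw [card_image_of_injOn, Nat.card_Icc, Nat.add_sub_cancel]
  intro a ha a' ha' h
  simp only [coe_Icc, Set.mem_Icc] at ha ha'
  have hcast : (a : ZMod n) = a' := sub_right_injective h
  rwa [ZMod.natCast_eq_natCast_iff', Nat.mod_eq_of_lt (by omega),
    Nat.mod_eq_of_lt (by omega)] at hcast

lemma le_card_circInNbrs_sdiff {n k σ : ℕ} (hσk : σ ≤ k) (hσn : σ < n) {j : ZMod n}
    {S : Finset (ZMod n)} (hout : ∀ a : ℕ, 1 ≤ a → a ≤ σ → j - (a : ZMod n) ∉ S) :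
    σ ≤ (circInNbrs n k j \ S).card := by
  calc σ = ((Icc 1 σ).image fun a : ℕ => j - (a : ZMod n)).card :=
        (card_image_sub_natCast_Icc hσn j).symm
    _ ≤ (circInNbrs n k j \ S).card := by
        refine card_le_card fun x hx => ?_
        obtain ⟨a, ha, rfl⟩ := mem_image.mp hx
        rw [mem_Icc] at ha
        exact mem_sdiff.mpr ⟨mem_image.mpr ⟨a, mem_Icc.mpr ⟨ha.1, ha.2.trans hσk⟩, rfl⟩,
          hout a ha.1 ha.2⟩

theorem circulant_exists_nearby_S2_general (n k σ : ℕ) (hn : 2 ≤ n)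
    (hk2 : k ≤ n - 1) (hσk : σ ≤ k)
    (S1 S2 : Finset (ZMod n))
    (h2 : S2.Nonempty) (hdisj : Disjoint S1 S2)
    (hcover : ∀ v : ZMod n, v ∈ S1 ∨ v ∈ S2)
    (hnotreach : ∀ j ∈ S2, ((circInNbrs n k j) \ S2).card < σ) :
    ∀ i ∈ S1, ∃ b : ℕ, 0 < b ∧ b < σ ∧ (i + (b : ZMod n)) ∈ S2 ∧
      ∀ c : ℕ, 0 < c → c < b → (i + (c : ZMod n)) ∈ S1 := by
  have : NeZero n := ⟨by omega⟩
  intro i hi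
  obtain ⟨b, hbS2, hbefore⟩ := ZMod.exists_first_natCast_add_mem i h2
  have hb0 : 0 < b := Nat.pos_of_ne_zero fun hb => by
    subst hb
    exact disjoint_left.mp hdisj hi (by simpa using hbS2)
  have hbσ : b < σ := by
    by_contra! hσb
    have hout : ∀ a : ℕ, 1 ≤ a → a ≤ σ → i + (b : ZMod n) - a ∉ S2 := fun a ha1 ha2 => by
      have := hbefore (b - a) (by omega)
      rwa [Nat.cast_sub (by omega), ← add_sub_assoc] at this
    exact (le_card_circInNbrs_sdiff hσk (by omega) hout).not_gt (hnotreach _ hbS2)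
  exact ⟨b, hb0, hbσ, hbS2, fun c _ hc => (hcover _).resolve_right (hbefore c hc)⟩

/-- If `S1, S2` is a partition of the vertex set of `C_n(1,…,k)` into nonempty
disjoint subsets, `1 ≤ σ ≤ k`, and `S2` is not `σ`-reachable, then for every
`i ∈ S1` there is `b` with `0 < b < σ` such that `i + b ∈ S2` and the vertices
`i+1, …, i+b-1` all lie in `S1`. -/
theorem circulant_exists_nearby_S2 (n k σ : ℕ) (hn : 2 ≤ n) (hk1 : 1 ≤ k)
    (hk2 : k ≤ n - 1) (hσ1 : 1 ≤ σ) (hσk : σ ≤ k)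
    (S1 S2 : Finset (ZMod n))
    (h1 : S1.Nonempty) (h2 : S2.Nonempty) (hdisj : Disjoint S1 S2)
    (hcover : ∀ v : ZMod n, v ∈ S1 ∨ v ∈ S2)
    (hnotreach : ∀ j ∈ S2, ((circInNbrs n k j) \ S2).card < σ) :
    ∀ i ∈ S1, ∃ b : ℕ, 0 < b ∧ b < σ ∧ (i + (b : ZMod n)) ∈ S2 ∧
      ∀ c : ℕ, 0 < c → c < b → (i + (c : ZMod n)) ∈ S1 :=
  circulant_exists_nearby_S2_general n k σ hn hk2 hσk S1 S2 h2 hdisj hcover hnotreach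
end
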